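/- arXiv:1601.01387 — 10 statements merged into one kernel-verified Lean document; each statement's English description precedes it below -/
import Mathlib

section
/- If an R-module M is Ext-injective in Cogen M (i.e., Ext^1_R(N, M) = 0 for every N in Cogen M), then the pair (°M, Cogen M) is a torsion pair in R-Mod, where °M is the class of modules N with Hom_R(N, M) = 0. -/
universe u

variable (R : Type u) [Ring R]

/-- `N` is a direct summand of a direct power of `M` (the class `Adp M`). -/
def InAdp (M : Type u) [AddCommGroup M] [Module R M]
    (N : Type u) [AddCommGroup N] [Module R N] : Prop :=
  ∃ (X : Type u) (i : N →ₗ[R] (X → M)) (p : (X → M) →ₗ[R] N),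
    p ∘ₗ i = LinearMap.id

/-- `N` embeds into a direct power of `M` (the class `Cogen M`). -/
def InCogen (M : Type u) [AddCommGroup M] [Module R M]
    (N : Type u) [AddCommGroup N] [Module R N] : Prop :=
  ∃ (X : Type u) (f : N →ₗ[R] (X → M)), Function.Injective f

/-- `N` admits an exact sequence `0 → N → M₀ → M₁` with `M₀, M₁ ∈ Adp M`
(the class `Copres M`). -/
def InCopres (M : Type u) [AddCommGroup M] [Module R M]
    (N : Type u) [AddCommGroup N] [Module R N] : Prop :=
  ∃ (M₀ M₁ : ModuleCat.{u} R), InAdp R M M₀ ∧ InAdp R M M₁ ∧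
    ∃ (f : N →ₗ[R] M₀) (g : M₀ →ₗ[R] M₁),
      Function.Injective f ∧ LinearMap.range f = LinearMap.ker g

/-- `Ext¹_R(N, M) = 0`, expressed as: every extension of `N` by `M` splits. -/
def Ext1Vanish (N : Type u) [AddCommGroup N] [Module R N]
    (M : Type u) [AddCommGroup M] [Module R M] : Prop :=
  ∀ (E : ModuleCat.{u} R) (i : M →ₗ[R] E) (p : E →ₗ[R] N),
    Function.Injective i → Function.Surjective p →
    LinearMap.range i = LinearMap.ker p →
    ∃ r : E →ₗ[R] M, r ∘ₗ i = LinearMap.id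

/-- `M` is a costar module: `Cogen M = Copres M` and `Hom_R(-, M)` preserves exactness of
short exact sequences with all terms in `Cogen M`. -/
def IsCostar (M : Type u) [AddCommGroup M] [Module R M] : Prop :=
  (∀ N : ModuleCat.{u} R, InCogen R M N ↔ InCopres R M N) ∧
  (∀ (A B C : ModuleCat.{u} R) (f : A →ₗ[R] B) (g : B →ₗ[R] C),
    InCogen R M A → InCogen R M B → InCogen R M C →
    Function.Injective f → Function.Surjective g →
    LinearMap.range f = LinearMap.ker g →
    ∀ h : A →ₗ[R] M, ∃ h' : B →ₗ[R] M, h' ∘ₗ f = h)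

/-- If `M` is Ext-injective in `Cogen M`, then `(°M, Cogen M)` is a torsion pair. -/
theorem stmt0 (M : Type u) [AddCommGroup M] [Module R M]
    (hExtInj : ∀ N : ModuleCat.{u} R, InCogen R M N → Ext1Vanish R N M) :
    (∀ (X Y : ModuleCat.{u} R), (∀ f : X →ₗ[R] M, f = 0) → InCogen R M Y →
        ∀ g : X →ₗ[R] Y, g = 0) ∧
    (∀ X : ModuleCat.{u} R,
        (∀ Y : ModuleCat.{u} R, InCogen R M Y → ∀ g : X →ₗ[R] Y, g = 0) →
        ∀ f : X →ₗ[R] M, f = 0) ∧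
    (∀ Y : ModuleCat.{u} R,
        (∀ X : ModuleCat.{u} R, (∀ f : X →ₗ[R] M, f = 0) → ∀ g : X →ₗ[R] Y, g = 0) →
        InCogen R M Y) := by
  refine ⟨?_, ?_, ?_⟩
  · intro X Y hX hY g
    obtain ⟨A, f, hf⟩ := hY
    ext x
    apply hf
    funext a
    have := congrArg (fun φ => φ x) (hX ((LinearMap.proj a) ∘ₗ f ∘ₗ g))
    simpa using this
  · intro X hX f
    refine hX (ModuleCat.of R M) ⟨PUnit, LinearMap.pi (fun _ => LinearMap.id), ?_⟩ f
    intro a b hab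
    simpa using congrFun hab PUnit.unit
  · intro Y hY
    set Φ : Y →ₗ[R] ((Y →ₗ[R] M) → M) := LinearMap.pi (fun f => f) with hΦ
    set K : Submodule R Y := LinearMap.ker Φ with hKdef
    have hK0 : ∀ h : K →ₗ[R] M, h = 0 := by
      intro h
      -- the quotient Y/K is in Cogen M
      have hQcogen : InCogen R M (ModuleCat.of R (Y ⧸ K)) :=
        ⟨(Y →ₗ[R] M), K.liftQ Φ le_rfl,
          LinearMap.ker_eq_bot.mp (Submodule.ker_liftQ_eq_bot K Φ le_rfl le_rfl)⟩
      -- pushout: E = (M × Y) / S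
      set S : Submodule R (M × Y) :=
        LinearMap.range (LinearMap.prod h (-(K.subtype))) with hSdef
      set E : ModuleCat.{u} R := ModuleCat.of R ((M × Y) ⧸ S) with hEdef
      set i : M →ₗ[R] E := S.mkQ ∘ₗ LinearMap.inl R M Y with hidef
      set p : E →ₗ[R] (Y ⧸ K) := S.liftQ (K.mkQ ∘ₗ LinearMap.snd R M Y) (by
        rintro ⟨m, y⟩ ⟨k, hk⟩
        simp only [LinearMap.prod_apply, Function.prod, Prod.mk.injEq, LinearMap.neg_apply,
          Submodule.coe_subtype] at hk
        have : y ∈ K := by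
          rw [← hk.2]; exact neg_mem k.2
        simpa using (Submodule.Quotient.mk_eq_zero K).mpr this) with hpdef
      have hiinj : Function.Injective i := by
        intro a b hab
        have : (a - b, (0 : Y)) ∈ S := by
          rw [← Submodule.Quotient.mk_eq_zero S]
          have h1 : ((a - b, (0:Y)) : M × Y) = (a, 0) - (b, 0) := by ext <;> simp
          rw [show ((Submodule.Quotient.mk (a - b, 0) : (M × Y) ⧸ S)) = S.mkQ (a - b, 0) from rfl,
            h1, map_sub]
          have h2 : S.mkQ (a, 0) = i a := rfl
          have h3 : S.mkQ (b, 0) = i b := rfl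
          rw [h2, h3, hab, sub_self]
        obtain ⟨k, hk⟩ := this
        simp only [LinearMap.prod_apply, Function.prod, Prod.mk.injEq, LinearMap.neg_apply,
          Submodule.coe_subtype] at hk
        have hk0 : k = 0 := by
          ext; simpa using hk.2.symm
        have : a - b = 0 := by rw [← hk.1, hk0, map_zero]
        exact sub_eq_zero.mp this
      have hpsurj : Function.Surjective p := by
        intro q
        obtain ⟨y, rfl⟩ := K.mkQ_surjective q
        exact ⟨S.mkQ (0, y), by
          show S.liftQ (K.mkQ ∘ₗ LinearMap.snd R M Y) _ (Submodule.Quotient.mk (0, y)) = _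
          rw [Submodule.liftQ_apply]; rfl⟩
      have hrange : LinearMap.range i = LinearMap.ker p := by
        apply le_antisymm
        · rintro _ ⟨m, rfl⟩
          show S.liftQ (K.mkQ ∘ₗ LinearMap.snd R M Y) _ (Submodule.Quotient.mk (m, 0)) = 0
          rw [Submodule.liftQ_apply]
          exact map_zero K.mkQ
        · rintro e he
          obtain ⟨⟨m, y⟩, rfl⟩ := S.mkQ_surjective e
          have hy : y ∈ K := by
            have h0 : S.liftQ (K.mkQ ∘ₗ LinearMap.snd R M Y) _ (Submodule.Quotient.mk (m, y)) = 0 :=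
              he
            rw [Submodule.liftQ_apply] at h0
            exact (Submodule.Quotient.mk_eq_zero K).mp h0
          refine ⟨m + h ⟨y, hy⟩, ?_⟩
          have hmem : ((h ⟨y, hy⟩ : M), -y) ∈ S := ⟨⟨y, hy⟩, by simp⟩
          have : S.mkQ (m + h ⟨y, hy⟩, 0) - S.mkQ (m, y) = S.mkQ (h ⟨y, hy⟩, -y) := by
            rw [← map_sub]
            congr 1
            ext <;> simp
          have hz : S.mkQ (h ⟨y, hy⟩, -y) = 0 := (Submodule.Quotient.mk_eq_zero S).mpr hmem
          have := sub_eq_zero.mp (this.trans hz)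
          exact this
      obtain ⟨r, hr⟩ := hExtInj (ModuleCat.of R (Y ⧸ K)) hQcogen E i p hiinj hpsurj hrange
      -- g : Y → M extending h
      set g : Y →ₗ[R] M := r ∘ₗ S.mkQ ∘ₗ LinearMap.inr R M Y with hgdef
      ext ⟨y, hy⟩
      have hmem : ((h ⟨y, hy⟩ : M), -y) ∈ S := ⟨⟨y, hy⟩, by simp⟩
      have heq : S.mkQ (0, y) = i (h ⟨y, hy⟩) := by
        have : S.mkQ (0, y) - S.mkQ (h ⟨y, hy⟩, 0) = -(S.mkQ (h ⟨y, hy⟩, -y)) := by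
          rw [← map_sub, ← map_neg]
          congr 1
          ext <;> simp
        have hz : S.mkQ (h ⟨y, hy⟩, -y) = 0 := (Submodule.Quotient.mk_eq_zero S).mpr hmem
        rw [hz, neg_zero] at this
        have := sub_eq_zero.mp this
        exact this
      have h1 : g y = h ⟨y, hy⟩ := by
        have : g y = r (S.mkQ (0, y)) := rfl
        rw [this, heq]
        exact congrArg (fun φ => φ (h ⟨y, hy⟩)) hr
      have h2 : g y = 0 := by
        have := hy
        rw [hKdef, LinearMap.mem_ker] at this
        exact congrFun this g
      simp only [LinearMap.zero_apply]
      rw [← h1, h2]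
    -- now K = ⊥
    have hKY : ∀ g : (ModuleCat.of R K) →ₗ[R] Y, g = 0 := hY (ModuleCat.of R K) hK0
    have hKbot : K = ⊥ := by
      rw [Submodule.eq_bot_iff]
      intro y hy
      have := congrArg (fun φ => φ (⟨y, hy⟩ : K)) (hKY K.subtype)
      simpa using this
    exact ⟨(Y →ₗ[R] M), Φ, by
      rw [← LinearMap.ker_eq_bot, ← hKdef]; exact hKbot⟩
end

section
/- Suppose 0 → A → B → C → 0 and 0 → A → B' → C' → 0 are two short exact sequences of R-modules that remain exact after applying Hom_R(−, M), with B, B' ∈ Adp M. Then B ⊕ C' ≅ B' ⊕ C. -/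
universe u

variable (R : Type u) [Ring R]

/-- A short exact sequence with a retraction of the injection splits. -/
lemma splitEquivAux {R : Type u} [Ring R] {B X C : Type u}
    [AddCommGroup B] [Module R B] [AddCommGroup X] [Module R X]
    [AddCommGroup C] [Module R C]
    (j : B →ₗ[R] X) (π : X →ₗ[R] C) (r : X →ₗ[R] B)
    (hr : r ∘ₗ j = LinearMap.id) (hπ : Function.Surjective π)
    (hker : LinearMap.ker π = LinearMap.range j) :
    Nonempty (X ≃ₗ[R] B × C) := by
  have hrj : ∀ b, r (j b) = b := fun b => congrArg (fun φ => φ b) hr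
  have hπj : ∀ b, π (j b) = 0 := by
    intro b
    have : j b ∈ LinearMap.ker π := by
      rw [hker]; exact ⟨b, rfl⟩
    exact this
  refine ⟨LinearEquiv.ofBijective (r.prod π) ⟨?_, ?_⟩⟩
  · rw [← LinearMap.ker_eq_bot]
    apply (Submodule.eq_bot_iff _).mpr
    intro x hx
    have h1 : r x = 0 := congrArg Prod.fst hx
    have h2 : π x = 0 := congrArg Prod.snd hx
    have : x ∈ LinearMap.range j := by rw [← hker]; exact h2
    obtain ⟨b, rfl⟩ := this
    rw [hrj] at h1
    rw [h1, map_zero]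
  · rintro ⟨b, c⟩
    obtain ⟨x0, hx0⟩ := hπ c
    refine ⟨j b + x0 - j (r x0), ?_⟩
    simp only [LinearMap.prod_apply, Function.prod, map_add, map_sub, hrj, hπj, hx0]
    ext <;> simp

/-- Two `Hom_R(-,M)`-exact short exact sequences `0 → A → B → C → 0` and
`0 → A → B' → C' → 0` with `B, B' ∈ Adp M` yield `B ⊕ C' ≅ B' ⊕ C`. -/
theorem stmt1 (M A B C B' C' : Type u)
    [AddCommGroup M] [Module R M] [AddCommGroup A] [Module R A]
    [AddCommGroup B] [Module R B] [AddCommGroup C] [Module R C]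
    [AddCommGroup B'] [Module R B'] [AddCommGroup C'] [Module R C']
    (f : A →ₗ[R] B) (g : B →ₗ[R] C) (f' : A →ₗ[R] B') (g' : B' →ₗ[R] C')
    (hf : Function.Injective f) (hg : Function.Surjective g)
    (hfg : LinearMap.range f = LinearMap.ker g)
    (hf' : Function.Injective f') (hg' : Function.Surjective g')
    (hfg' : LinearMap.range f' = LinearMap.ker g')
    (hB : InAdp R M B) (hB' : InAdp R M B')
    (hHomExact : ∀ h : A →ₗ[R] M, ∃ k : B →ₗ[R] M, k ∘ₗ f = h)
    (hHomExact' : ∀ h : A →ₗ[R] M, ∃ k : B' →ₗ[R] M, k ∘ₗ f' = h) :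
    Nonempty ((B × C') ≃ₗ[R] (B' × C)) := by
  classical
  -- the pushout X = (B × B') / K, K = {(f a, -f' a)}
  set δ : A →ₗ[R] B × B' := f.prod (-f') with hδ
  set K : Submodule R (B × B') := LinearMap.range δ with hK
  let X := (B × B') ⧸ K
  let q : (B × B') →ₗ[R] X := K.mkQ
  let j : B →ₗ[R] X := q ∘ₗ LinearMap.inl R B B'
  let j' : B' →ₗ[R] X := q ∘ₗ LinearMap.inr R B B'
  have hq0 : ∀ a : A, q (f a, -f' a) = 0 := by
    intro a
    rw [Submodule.mkQ_apply, Submodule.Quotient.mk_eq_zero]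
    exact ⟨a, rfl⟩
  -- the two projections from X
  have hπ'def : ∀ x ∈ K, (g' ∘ₗ LinearMap.snd R B B') x = 0 := by
    rintro x ⟨a, rfl⟩
    have : f' a ∈ LinearMap.ker g' := by rw [← hfg']; exact ⟨a, rfl⟩
    simp only [LinearMap.coe_comp, Function.comp_apply, LinearMap.snd_apply,
      hδ, LinearMap.prod_apply, Function.prod, LinearMap.neg_apply, map_neg]
    rw [this]; simp
  have hπdef : ∀ x ∈ K, (g ∘ₗ LinearMap.fst R B B') x = 0 := by
    rintro x ⟨a, rfl⟩
    have : f a ∈ LinearMap.ker g := by rw [← hfg]; exact ⟨a, rfl⟩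
    simpa [hδ] using this
  let π : X →ₗ[R] C' := K.liftQ (g' ∘ₗ LinearMap.snd R B B') hπ'def
  let π' : X →ₗ[R] C := K.liftQ (g ∘ₗ LinearMap.fst R B B') hπdef
  have hπsurj : Function.Surjective π := by
    intro c
    obtain ⟨b', hb'⟩ := hg' c
    exact ⟨q (0, b'), hb'⟩
  have hπ'surj : Function.Surjective π' := by
    intro c
    obtain ⟨b, hb⟩ := hg c
    exact ⟨q (b, 0), hb⟩
  have hπapp : ∀ p : B × B', π (q p) = g' p.2 := fun p => rfl
  have hπ'app : ∀ p : B × B', π' (q p) = g p.1 := fun p => rfl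
  -- kernel computations
  have hkerπ : LinearMap.ker π = LinearMap.range j := by
    apply le_antisymm
    · intro x hx
      obtain ⟨⟨b, b'⟩, rfl⟩ := K.mkQ_surjective x
      have h1 : g' b' = 0 := hx
      have h2 : b' ∈ LinearMap.range f' := by rw [hfg']; exact h1
      obtain ⟨a, ha⟩ := h2
      refine ⟨b + f a, ?_⟩
      have : q (b + f a, 0) - q (b, b') = q (f a, -b') := by
        rw [← map_sub]; congr 1; ext <;> simp
      have h3 : q (f a, -b') = 0 := by rw [← ha]; exact hq0 a
      have h4 : q (b + f a, 0) = q (b, b') := by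
        have := this; rw [h3, sub_eq_zero] at this; exact this
      exact h4
    · rintro x ⟨b, rfl⟩
      show π (q (b, 0)) = 0
      rw [hπapp]; simp
  have hkerπ' : LinearMap.ker π' = LinearMap.range j' := by
    apply le_antisymm
    · intro x hx
      obtain ⟨⟨b, b'⟩, rfl⟩ := K.mkQ_surjective x
      have h1 : g b = 0 := hx
      have h2 : b ∈ LinearMap.range f := by rw [hfg]; exact h1
      obtain ⟨a, ha⟩ := h2
      refine ⟨b' + f' a, ?_⟩
      have h3 : q (0, b' + f' a) - q (b, b') = q (-b, f' a) := by
        rw [← map_sub]; congr 1; ext <;> simp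
      have h4 : q (-b, f' a) = 0 := by
        have := hq0 (-a)
        simpa [ha, map_neg, neg_neg] using this
      have h5 : q (0, b' + f' a) = q (b, b') := by
        rw [h4, sub_eq_zero] at h3; exact h3
      exact h5
    · rintro x ⟨b', rfl⟩
      show π' (q (0, b')) = 0
      rw [hπ'app]; simp
  -- retraction of j, using hB and hHomExact'
  obtain ⟨Y, i, p, hpi⟩ := hB
  have hpiapp : ∀ b, p (i b) = b := fun b => congrArg (fun φ => φ b) hpi
  let k : Y → (B' →ₗ[R] M) := fun y =>
    (hHomExact' ((LinearMap.proj y ∘ₗ i) ∘ₗ f)).choose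
  have hk : ∀ y a, k y (f' a) = i (f a) y :=
    fun y a => congrArg (fun φ => φ a) (hHomExact' ((LinearMap.proj y ∘ₗ i) ∘ₗ f)).choose_spec
  let itil : (B × B') →ₗ[R] (Y → M) :=
    LinearMap.pi (fun y => (LinearMap.proj y ∘ₗ i) ∘ₗ LinearMap.fst R B B'
      + (k y) ∘ₗ LinearMap.snd R B B')
  have hitilK : ∀ x ∈ K, itil x = 0 := by
    rintro x ⟨a, rfl⟩
    funext y
    simp only [itil, LinearMap.pi_apply, LinearMap.add_apply, LinearMap.coe_comp,
      Function.comp_apply, LinearMap.fst_apply, LinearMap.snd_apply, LinearMap.proj_apply,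
      hδ, LinearMap.prod_apply, Function.prod, LinearMap.neg_apply, map_neg, hk]
    simp
  let ibar : X →ₗ[R] (Y → M) := K.liftQ itil hitilK
  let r : X →ₗ[R] B := p ∘ₗ ibar
  have hrj : r ∘ₗ j = LinearMap.id := by
    ext b
    show p (itil (b, 0)) = b
    have : itil (b, 0) = i b := by
      funext y
      simp [itil]
    rw [this, hpiapp]
  -- retraction of j', using hB' and hHomExact
  obtain ⟨Y', i', p', hpi'⟩ := hB'
  have hpi'app : ∀ b, p' (i' b) = b := fun b => congrArg (fun φ => φ b) hpi'
  let k' : Y' → (B →ₗ[R] M) := fun y =>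
    (hHomExact ((LinearMap.proj y ∘ₗ i') ∘ₗ f')).choose
  have hk' : ∀ y a, k' y (f a) = i' (f' a) y :=
    fun y a => congrArg (fun φ => φ a) (hHomExact ((LinearMap.proj y ∘ₗ i') ∘ₗ f')).choose_spec
  let itil' : (B × B') →ₗ[R] (Y' → M) :=
    LinearMap.pi (fun y => (k' y) ∘ₗ LinearMap.fst R B B'
      + (LinearMap.proj y ∘ₗ i') ∘ₗ LinearMap.snd R B B')
  have hitil'K : ∀ x ∈ K, itil' x = 0 := by
    rintro x ⟨a, rfl⟩
    funext y
    simp only [itil', LinearMap.pi_apply, LinearMap.add_apply, LinearMap.coe_comp,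
      Function.comp_apply, LinearMap.fst_apply, LinearMap.snd_apply, LinearMap.proj_apply,
      hδ, LinearMap.prod_apply, Function.prod, LinearMap.neg_apply, map_neg, hk']
    simp
  let ibar' : X →ₗ[R] (Y' → M) := K.liftQ itil' hitil'K
  let r' : X →ₗ[R] B' := p' ∘ₗ ibar'
  have hr'j' : r' ∘ₗ j' = LinearMap.id := by
    ext b'
    show p' (itil' (0, b')) = b'
    have : itil' (0, b') = i' b' := by
      funext y
      simp [itil']
    rw [this, hpi'app]
  -- combine
  obtain ⟨e₁⟩ := splitEquivAux j π r hrj hπsurj hkerπ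
  obtain ⟨e₂⟩ := splitEquivAux j' π' r' hr'j' hπ'surj hkerπ'
  exact ⟨e₁.symm.trans e₂⟩
end

section
/- Let M be a costar module and let 0 → A → B → C → 0 be a Hom_R(−,M)-exact short exact sequence with A ∈ Cogen M. If C ∈ Cogen M, then B ∈ Cogen M. -/
universe u

variable (R : Type u) [Ring R]

/-- For a costar module `M` and a `Hom_R(-,M)`-exact short exact sequence
`0 → A → B → C → 0` with `A ∈ Cogen M`: if `C ∈ Cogen M` then `B ∈ Cogen M`. -/
theorem stmt2 (M A B C : Type u)
    [AddCommGroup M] [Module R M] [AddCommGroup A] [Module R A]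
    [AddCommGroup B] [Module R B] [AddCommGroup C] [Module R C]
    (hM : IsCostar R M)
    (f : A →ₗ[R] B) (g : B →ₗ[R] C)
    (hf : Function.Injective f) (hg : Function.Surjective g)
    (hfg : LinearMap.range f = LinearMap.ker g)
    (hHomExact : ∀ h : A →ₗ[R] M, ∃ k : B →ₗ[R] M, k ∘ₗ f = h)
    (hA : InCogen R M A) (hC : InCogen R M C) :
    InCogen R M B := by
  obtain ⟨X, e, he⟩ := hA
  obtain ⟨Y, e', he'⟩ := hC
  choose k hk using fun x : X => hHomExact ((LinearMap.proj x) ∘ₗ e)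
  refine ⟨X ⊕ Y, LinearMap.pi (Sum.elim k (fun y => (LinearMap.proj y) ∘ₗ e' ∘ₗ g)), ?_⟩
  rw [injective_iff_map_eq_zero]
  intro b hb
  have hgb : g b = 0 := by
    apply he'
    ext y
    have := congrFun hb (Sum.inr y)
    simpa using this
  obtain ⟨a, ha⟩ : b ∈ LinearMap.range f := by rw [hfg]; exact hgb
  have ha0 : a = 0 := by
    apply he
    rw [map_zero]
    ext x
    have h1 := congrFun hb (Sum.inl x)
    have h2 := congrArg (fun φ => φ a) (hk x)
    simp only [LinearMap.comp_apply, LinearMap.proj_apply] at h2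
    simp only [LinearMap.pi_apply, Sum.elim_inl] at h1
    rw [← ha, h2] at h1
    simpa using h1
  rw [← ha, ha0, map_zero]
end

section
/- Let M be a costar module and let 0 → A → B → C → 0 be a Hom_R(−,M)-exact short exact sequence with A ∈ Cogen M. If B ∈ Cogen M, then C ∈ Cogen M. -/
universe u

variable (R : Type u) [Ring R]

/-- For a costar module `M` and a `Hom_R(-,M)`-exact short exact sequence
`0 → A → B → C → 0` with `A ∈ Cogen M`: if `B ∈ Cogen M` then `C ∈ Cogen M`. -/
theorem stmt3 (M A B C : Type u)
    [AddCommGroup M] [Module R M] [AddCommGroup A] [Module R A]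
    [AddCommGroup B] [Module R B] [AddCommGroup C] [Module R C]
    (hM : IsCostar R M)
    (f : A →ₗ[R] B) (g : B →ₗ[R] C)
    (hf : Function.Injective f) (hg : Function.Surjective g)
    (hfg : LinearMap.range f = LinearMap.ker g)
    (hHomExact : ∀ h : A →ₗ[R] M, ∃ k : B →ₗ[R] M, k ∘ₗ f = h)
    (hA : InCogen R M A) (hB : InCogen R M B) :
    InCogen R M C := by
  classical
  obtain ⟨Y, j, hj⟩ := id hB
  obtain ⟨M₀, M₁, hAdp₀, hAdp₁, u, w, hu, huw⟩ := (hM.1 (ModuleCat.of R A)).mp hA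
  obtain ⟨X₀, i₀, p₀, hp₀⟩ := hAdp₀
  obtain ⟨X₁, i₁, p₁, hp₁⟩ := hAdp₁
  have hi₁ : Function.Injective i₁ := by
    have : ∀ x, p₁ (i₁ x) = x := fun x => by
      rw [← LinearMap.comp_apply, hp₁]; rfl
    exact Function.LeftInverse.injective this
  -- construct v : B →ₗ M₀ with v ∘ f = u
  set vpi : B →ₗ[R] (X₀ → M) :=
    LinearMap.pi (fun x => (hHomExact ((LinearMap.proj x : (X₀ → M) →ₗ[R] M) ∘ₗ (i₀ ∘ₗ u))).choose) with hvpi_def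
  have hvpif : vpi ∘ₗ f = i₀ ∘ₗ u := by
    apply LinearMap.ext; intro a
    funext x
    have hs := (hHomExact ((LinearMap.proj x : (X₀ → M) →ₗ[R] M) ∘ₗ (i₀ ∘ₗ u))).choose_spec
    have := DFunLike.congr_fun hs a
    simpa [hvpi_def] using this
  set v : B →ₗ[R] M₀ := p₀ ∘ₗ vpi with hv_def
  have hvf : v ∘ₗ f = u := by
    rw [hv_def, LinearMap.comp_assoc, hvpif, ← LinearMap.comp_assoc, hp₀, LinearMap.id_comp]
  have hvfa : ∀ a, v (f a) = u a := fun a => DFunLike.congr_fun hvf a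
  set K : Submodule R B := LinearMap.ker v with hK_def
  set S : Submodule R B := LinearMap.range f ⊔ K with hS_def
  -- ker (w ∘ v) = S
  have hSker : LinearMap.ker (w ∘ₗ v) = S := by
    apply le_antisymm
    · intro b hb
      have : v b ∈ LinearMap.ker w := by simpa using hb
      rw [← huw] at this
      obtain ⟨a, ha⟩ := this
      have hk : b - f a ∈ K := by
        simp only [hK_def, LinearMap.mem_ker, map_sub, hvfa, ha, sub_self]
      have : b = f a + (b - f a) := by abel
      rw [this]
      exact Submodule.add_mem_sup (LinearMap.mem_range_self f a) hk
    · intro b hb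
      obtain ⟨b₁, hb₁, b₂, hb₂, rfl⟩ := Submodule.mem_sup.mp hb
      obtain ⟨a, rfl⟩ := hb₁
      have h2 : v b₂ = 0 := hb₂
      have h1 : w (u a) = 0 := by
        have : u a ∈ LinearMap.ker w := huw ▸ LinearMap.mem_range_self u a
        exact this
      simp [LinearMap.mem_ker, hvfa, h2, h1]
  -- the map t : A × K ≃ S
  have hmemS : ∀ (z : A × ↥K), f z.1 + (z.2 : B) ∈ S :=
    fun z => Submodule.add_mem_sup (LinearMap.mem_range_self f z.1) z.2.2
  set τ : (A × ↥K) →ₗ[R] B :=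
    f ∘ₗ LinearMap.fst R A ↥K + K.subtype ∘ₗ LinearMap.snd R A ↥K with hτ_def
  have hτ_apply : ∀ z : A × ↥K, τ z = f z.1 + (z.2 : B) := fun z => by
    simp [hτ_def]
  set t : (A × ↥K) →ₗ[R] ↥S := τ.codRestrict S (fun z => by rw [hτ_apply]; exact hmemS z)
    with ht_def
  have ht_apply : ∀ z : A × ↥K, (t z : B) = f z.1 + (z.2 : B) := fun z => by
    simp [ht_def, LinearMap.codRestrict_apply, hτ_apply]
  have htinj : Function.Injective t := by
    intro z₁ z₂ h
    have h' : f z₁.1 + (z₁.2 : B) = f z₂.1 + (z₂.2 : B) := by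
      rw [← ht_apply, ← ht_apply, h]
    have hd : f (z₁.1 - z₂.1) = (z₂.2 : B) - (z₁.2 : B) := by
      rw [map_sub, sub_eq_sub_iff_add_eq_add]
      exact h'.trans (add_comm _ _)
    have hdk : f (z₁.1 - z₂.1) ∈ K := by
      rw [hd]; exact sub_mem z₂.2.2 z₁.2.2
    have hva : u (z₁.1 - z₂.1) = 0 := by
      rw [← hvfa]; exact hdk
    have hz : z₁.1 - z₂.1 = 0 := hu (by simpa using hva)
    have h1 : z₁.1 = z₂.1 := sub_eq_zero.mp hz
    have h2 : z₁.2 = z₂.2 := by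
      apply Subtype.ext
      have h0 : f (z₁.1 - z₂.1) = 0 := by rw [hz, map_zero]
      rw [h0] at hd
      exact (sub_eq_zero.mp hd.symm).symm
    exact Prod.ext h1 h2
  have htsurj : Function.Surjective t := by
    rintro ⟨s, hs⟩
    obtain ⟨b₁, hb₁, b₂, hb₂, rfl⟩ := Submodule.mem_sup.mp hs
    obtain ⟨a, rfl⟩ := hb₁
    exact ⟨(a, ⟨b₂, hb₂⟩), Subtype.ext (by rw [ht_apply])⟩
  set tE : (A × ↥K) ≃ₗ[R] ↥S := LinearEquiv.ofBijective t ⟨htinj, htsurj⟩ with htE_def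
  set h₀ : ↥S →ₗ[R] (Y → M) :=
    (j ∘ₗ f ∘ₗ LinearMap.fst R A ↥K) ∘ₗ (tE.symm : ↥S →ₗ[R] A × ↥K) with hh₀_def
  have hh₀ : ∀ (s : ↥S) (a : A) (k : B) (hk : k ∈ K), (s : B) = f a + k → h₀ s = j (f a) := by
    intro s a k hk hsk
    have hts : tE.symm s = (a, ⟨k, hk⟩) := by
      rw [LinearEquiv.symm_apply_eq]
      apply Subtype.ext
      rw [htE_def]
      show (s : B) = (t (a, ⟨k, hk⟩) : B)
      rw [ht_apply, hsk]
    rw [hh₀_def]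
    simp only [LinearMap.comp_apply, LinearEquiv.coe_coe, hts]
    rfl
  -- apply the costar extension property to 0 → S → B → B/S → 0
  have cogS : InCogen R M ↥S := by
    refine ⟨Y, j ∘ₗ S.subtype, ?_⟩
    rw [LinearMap.coe_comp]
    exact hj.comp (Submodule.injective_subtype S)
  have hSle : S ≤ LinearMap.ker (w ∘ₗ v) := le_of_eq hSker.symm
  have cogQ : InCogen R M (B ⧸ S) := by
    refine ⟨X₁, i₁ ∘ₗ Submodule.liftQ S (w ∘ₗ v) hSle, ?_⟩
    rw [LinearMap.coe_comp]
    refine hi₁.comp ?_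
    rw [← LinearMap.ker_eq_bot]
    exact Submodule.ker_liftQ_eq_bot S (w ∘ₗ v) hSle (le_of_eq hSker)
  have hext := hM.2 (ModuleCat.of R ↥S) (ModuleCat.of R B) (ModuleCat.of R (B ⧸ S))
    S.subtype S.mkQ cogS hB cogQ (Submodule.injective_subtype S)
    (Submodule.mkQ_surjective S)
    (by rw [Submodule.range_subtype, Submodule.ker_mkQ])
  set e : B →ₗ[R] (Y → M) :=
    LinearMap.pi (fun y => (hext ((LinearMap.proj y : (Y → M) →ₗ[R] M) ∘ₗ h₀)).choose)
    with he_def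
  have heS : ∀ s : ↥S, e (s : B) = h₀ s := by
    intro s
    funext y
    have hs := (hext ((LinearMap.proj y : (Y → M) →ₗ[R] M) ∘ₗ h₀)).choose_spec
    have := DFunLike.congr_fun hs s
    simpa [he_def] using this
  set j' : B →ₗ[R] (Y → M) := j - e with hj'_def
  have hj'f : ∀ a, j' (f a) = 0 := by
    intro a
    have hmem : f a ∈ S := Submodule.mem_sup_left (LinearMap.mem_range_self f a)
    have he : e (f a) = j (f a) := by
      have h1 : e ((⟨f a, hmem⟩ : ↥S) : B) = h₀ ⟨f a, hmem⟩ := heS ⟨f a, hmem⟩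
      have h2 : h₀ (⟨f a, hmem⟩ : ↥S) = j (f a) :=
        hh₀ ⟨f a, hmem⟩ a 0 K.zero_mem (by simp)
      simpa [h2] using h1
    simp [hj'_def, he]
  have hj'k : ∀ k (hk : k ∈ K), j' k = j k := by
    intro k hk
    have hmem : k ∈ S := Submodule.mem_sup_right hk
    have he : e k = 0 := by
      have h1 : e ((⟨k, hmem⟩ : ↥S) : B) = h₀ ⟨k, hmem⟩ := heS ⟨k, hmem⟩
      have h2 : h₀ (⟨k, hmem⟩ : ↥S) = j (f 0) :=
        hh₀ ⟨k, hmem⟩ 0 k hk (by simp)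
      simp only [map_zero] at h2
      simpa [h2] using h1
    simp [hj'_def, he]
  -- build the embedding of C
  have hkg : LinearMap.ker g = LinearMap.range f := hfg.symm
  have hle₁ : LinearMap.ker g ≤ LinearMap.ker (w ∘ₗ v) := by
    rw [hkg, hSker, hS_def]; exact le_sup_left
  have hle₂ : LinearMap.ker g ≤ LinearMap.ker j' := by
    rw [hkg]
    rintro b ⟨a, rfl⟩
    exact LinearMap.mem_ker.mpr (hj'f a)
  set φ' : (B ⧸ LinearMap.ker g) →ₗ[R] M₁ := Submodule.liftQ (LinearMap.ker g) (w ∘ₗ v) hle₁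
    with hφ'_def
  set psiL : (B ⧸ LinearMap.ker g) →ₗ[R] (Y → M) := Submodule.liftQ (LinearMap.ker g) j' hle₂
    with hpsiL_def
  set F : (B ⧸ LinearMap.ker g) →ₗ[R] ((X₁ ⊕ Y) → M) :=
    LinearMap.pi (Sum.elim
      (fun x₁ => (LinearMap.proj x₁ : (X₁ → M) →ₗ[R] M) ∘ₗ (i₁ ∘ₗ φ'))
      (fun y => (LinearMap.proj y : (Y → M) →ₗ[R] M) ∘ₗ psiL)) with hF_def
  have hFker : ∀ q, F q = 0 → q = 0 := by
    intro q hq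
    obtain ⟨b, rfl⟩ := Submodule.mkQ_surjective (LinearMap.ker g) q
    have hφ : (w ∘ₗ v) b = 0 := by
      apply hi₁
      rw [map_zero]
      funext x₁
      have := congrFun hq (Sum.inl x₁)
      simpa [hF_def, hφ'_def] using this
    have hpsi : j' b = 0 := by
      funext y
      have := congrFun hq (Sum.inr y)
      simpa [hF_def, hpsiL_def] using this
    have hbS : b ∈ S := hSker ▸ LinearMap.mem_ker.mpr hφ
    obtain ⟨b₁, hb₁, b₂, hb₂, rfl⟩ := Submodule.mem_sup.mp hbS
    obtain ⟨a, rfl⟩ := hb₁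
    have : j' (f a + b₂) = j b₂ := by
      rw [map_add, hj'f a, hj'k b₂ hb₂, zero_add]
    rw [hpsi] at this
    have hb₂0 : b₂ = 0 := hj (by rw [← this, map_zero])
    rw [hb₂0, add_zero, Submodule.mkQ_apply, Submodule.Quotient.mk_eq_zero]
    exact hkg ▸ LinearMap.mem_range_self f a
  have hFinj : Function.Injective F := by
    intro q₁ q₂ h
    have : q₁ - q₂ = 0 := hFker _ (by rw [map_sub, h, sub_self])
    exact sub_eq_zero.mp this
  set eqv : (B ⧸ LinearMap.ker g) ≃ₗ[R] C := g.quotKerEquivOfSurjective hg with heqv_def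
  refine ⟨X₁ ⊕ Y, F ∘ₗ (eqv.symm : C →ₗ[R] B ⧸ LinearMap.ker g), ?_⟩
  rw [LinearMap.coe_comp]
  exact hFinj.comp (by exact eqv.symm.injective)
end

section
/- An R-module M is quasi-cotilting (i.e., a costar module that is Ext-injective in Cogen M) if and only if Cogen M = Copres M and Ext^1_R(N, M) = 0 for all N ∈ Cogen M. -/
universe u

variable (R : Type u) [Ring R]

/-- `M` is quasi-cotilting (a costar module which is Ext-injective in `Cogen M`) iff
`Cogen M = Copres M` and `Ext¹(N, M) = 0` for all `N ∈ Cogen M`. -/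
theorem stmt4 (M : Type u) [AddCommGroup M] [Module R M] :
    (IsCostar R M ∧ ∀ N : ModuleCat.{u} R, InCogen R M N → Ext1Vanish R N M) ↔
    ((∀ N : ModuleCat.{u} R, InCogen R M N ↔ InCopres R M N) ∧
      ∀ N : ModuleCat.{u} R, InCogen R M N → Ext1Vanish R N M) := by
  constructor
  · rintro ⟨⟨h1, _⟩, h2⟩
    exact ⟨h1, h2⟩
  · rintro ⟨hcc, hext⟩
    refine ⟨⟨hcc, ?_⟩, hext⟩
    intro A B C f g hA hB hC hf hg hfg h
    -- pushout construction
    set φ : A →ₗ[R] (M × B) := LinearMap.prod h (-f) with hφ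
    set S : Submodule R (M × B) := LinearMap.range φ with hS
    set E := ModuleCat.of R ((M × B) ⧸ S)
    set i : M →ₗ[R] E := S.mkQ ∘ₗ LinearMap.inl R M B with hi
    have quot_eq : ∀ x y : M × B, x - y ∈ S → S.mkQ x = S.mkQ y :=
      fun x y hxy => (Submodule.Quotient.eq S).mpr hxy
    have quot_eq' : ∀ x y : M × B, S.mkQ x = S.mkQ y → x - y ∈ S :=
      fun x y hxy => (Submodule.Quotient.eq S).mp hxy
    have hker : S ≤ LinearMap.ker (g ∘ₗ LinearMap.snd R M B) := by
      rintro x ⟨a, rfl⟩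
      have : f a ∈ LinearMap.ker g := hfg ▸ LinearMap.mem_range_self f a
      simpa [φ] using this
    set p : E →ₗ[R] C := S.liftQ (g ∘ₗ LinearMap.snd R M B) hker with hp
    have plift : ∀ x : M × B, p (S.mkQ x) = g x.2 := fun x => rfl
    have hiinj : Function.Injective i := by
      intro m m' hmm
      have hmm' : S.mkQ (m, (0 : B)) = S.mkQ (m', 0) := hmm
      obtain ⟨a, ha⟩ := quot_eq' _ _ hmm'
      have ha1 : h a = m - m' := by
        have := congrArg Prod.fst ha; simpa [φ] using this
      have ha2 : -f a = (0 : B) := by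
        have := congrArg Prod.snd ha; simpa [φ] using this
      have : a = 0 := hf (by simpa using neg_eq_zero.mp ha2)
      have : m - m' = 0 := by rw [← ha1, this, map_zero]
      exact sub_eq_zero.mp this
    have hpsurj : Function.Surjective p := by
      intro c
      obtain ⟨b, rfl⟩ := hg c
      exact ⟨S.mkQ (0, b), plift _⟩
    have hrk : LinearMap.range i = LinearMap.ker p := by
      apply le_antisymm
      · rintro _ ⟨m, rfl⟩
        have : p (S.mkQ (m, 0)) = g 0 := plift _
        exact LinearMap.mem_ker.mpr (by rw [map_zero] at this; exact this)
      · rintro x hx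
        obtain ⟨⟨m, b⟩, rfl⟩ := S.mkQ_surjective x
        have hgb : g b = 0 := by
          have := plift (m, b)
          have hx' : p (S.mkQ (m, b)) = 0 := hx
          rw [this] at hx'; exact hx'
        have hb : b ∈ LinearMap.ker g := hgb
        rw [← hfg] at hb
        obtain ⟨a, ha⟩ := hb
        refine ⟨m + h a, ?_⟩
        show S.mkQ (m + h a, 0) = S.mkQ (m, b)
        refine quot_eq _ _ ⟨a, ?_⟩
        simp [φ, Prod.ext_iff, ha]
    obtain ⟨r, hr⟩ := hext C hC E i p hiinj hpsurj hrk
    refine ⟨r ∘ₗ (S.mkQ ∘ₗ LinearMap.inr R M B), ?_⟩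
    ext a
    have key : S.mkQ ((0 : M), f a) = S.mkQ (h a, 0) := by
      refine quot_eq _ _ ⟨-a, ?_⟩
      simp [φ, Prod.ext_iff]
    have hr' : r (S.mkQ (h a, 0)) = h a := congrArg (fun ψ => ψ (h a)) hr
    show r (S.mkQ (0, f a)) = h a
    rw [key]; exact hr'
end

section
/- If an R-module M satisfies Cogen M = Fac(Cogen M) ∩ ⊥₁M, then Cogen M = Copres M and M is Ext-injective in Cogen M (hence M is quasi-cotilting). -/
universe u

variable (R : Type u) [Ring R]

/-- `N` is a quotient of a module in `Cogen M`. -/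
def InFacCogen (M : Type u) [AddCommGroup M] [Module R M]
    (N : Type u) [AddCommGroup N] [Module R N] : Prop :=
  ∃ (L : ModuleCat.{u} R) (p : L →ₗ[R] N), InCogen R M L ∧ Function.Surjective p


/-- Auxiliary: given an exact sequence `0 → N → W → C → 0` where every map `N → M`
extends along `e : N → W`, and `Ext¹(W, M) = 0`, then `Ext¹(C, M) = 0`. -/
theorem auxExt (M N W C : Type u) [AddCommGroup M] [Module R M]
    [AddCommGroup N] [Module R N] [AddCommGroup W] [Module R W]
    [AddCommGroup C] [Module R C]
    (e : N →ₗ[R] W) (q : W →ₗ[R] C)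
    (hq : Function.Surjective q) (hker : LinearMap.ker q = LinearMap.range e)
    (hext : ∀ y : N →ₗ[R] M, ∃ t : W →ₗ[R] M, t ∘ₗ e = y)
    (hWext : Ext1Vanish R W M) :
    Ext1Vanish R C M := by
  intro E i p hi hp hrange
  -- the pullback of p and q
  set φ : (E × W) →ₗ[R] C :=
    p ∘ₗ LinearMap.fst R E W - q ∘ₗ LinearMap.snd R E W with hφ
  set P : Submodule R (E × W) := LinearMap.ker φ with hP
  have memP : ∀ (x : E) (w : W), ((x, w) : E × W) ∈ P ↔ p x = q w := by
    intro x w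
    simp [hP, hφ, LinearMap.mem_ker, LinearMap.sub_apply, LinearMap.comp_apply,
      sub_eq_zero]
  have memP' : ∀ z : E × W, z ∈ P ↔ p z.1 = q z.2 := by
    intro z; rw [show z = (z.1, z.2) from rfl]; exact memP z.1 z.2
  have hjm : ∀ m : M, ((LinearMap.inl R E W ∘ₗ i) m) ∈ P := by
    intro m
    have him : i m ∈ LinearMap.ker p := by rw [← hrange]; exact ⟨m, rfl⟩
    have : p (i m) = 0 := him
    simpa [memP, this] using (memP (i m) 0).mpr (by simp [this])
  set j : M →ₗ[R] P := LinearMap.codRestrict P (LinearMap.inl R E W ∘ₗ i) hjm with hj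
  set π : P →ₗ[R] W := LinearMap.snd R E W ∘ₗ P.subtype with hπ
  have hjinj : Function.Injective j := by
    intro a b hab
    apply hi
    have := congrArg Subtype.val hab
    exact congrArg Prod.fst this
  have hπsurj : Function.Surjective π := by
    intro w
    obtain ⟨x, hx⟩ := hp (q w)
    exact ⟨⟨(x, w), (memP x w).mpr hx⟩, rfl⟩
  have hrj : LinearMap.range j = LinearMap.ker π := by
    ext z
    constructor
    · rintro ⟨m, rfl⟩
      simp [hπ, hj, LinearMap.codRestrict]
    · intro hz
      have hz2 : (z : E × W).2 = 0 := hz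
      have hz1 : p (z : E × W).1 = 0 := by
        have := (memP' (z : E × W)).mp z.2
        rw [this, hz2, map_zero]
      have : (z : E × W).1 ∈ LinearMap.range i := by rw [hrange]; exact hz1
      obtain ⟨m, hm⟩ := this
      refine ⟨m, ?_⟩
      apply Subtype.ext
      apply Prod.ext
      · simpa [hj, LinearMap.codRestrict] using hm
      · simpa [hj, LinearMap.codRestrict] using hz2.symm
  obtain ⟨s, hs⟩ := hWext (ModuleCat.of R P) j π hjinj hπsurj hrj
  have hνm : ∀ n : N, ((LinearMap.inr R E W ∘ₗ e) n) ∈ P := by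
    intro n
    have : e n ∈ LinearMap.ker q := by rw [hker]; exact ⟨n, rfl⟩
    have hqe : q (e n) = 0 := this
    exact (memP 0 (e n)).mpr (by simp [hqe])
  set ν : N →ₗ[R] P := LinearMap.codRestrict P (LinearMap.inr R E W ∘ₗ e) hνm with hν
  obtain ⟨t, ht⟩ := hext (s ∘ₗ ν)
  set u : ↥P →ₗ[R] M := (show ↥P →ₗ[R] M from s) - t ∘ₗ π with hu
  have hu0 : ∀ z : P, (z : E × W).1 = 0 → u z = 0 := by
    intro z hz
    have hz2 : q (z : E × W).2 = 0 := by
      have := (memP' (z : E × W)).mp z.2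
      rw [← this, hz, map_zero]
    have : (z : E × W).2 ∈ LinearMap.range e := by rw [← hker]; exact hz2
    obtain ⟨n, hn⟩ := this
    have hzν : z = ν n := by
      apply Subtype.ext
      apply Prod.ext
      · simpa [hν, LinearMap.codRestrict] using hz
      · simpa [hν, LinearMap.codRestrict] using hn.symm
    have hπν : π (ν n) = e n := rfl
    have htn : t (e n) = s (ν n) := by
      have := LinearMap.congr_fun ht n
      simpa using this
    rw [hzν]
    have : u (ν n) = s (ν n) - t (π (ν n)) := rfl
    rw [this, hπν, htn, sub_self]
  have huind : ∀ z z' : P, (z : E × W).1 = (z' : E × W).1 → u z = u z' := by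
    intro z z' hzz
    have := hu0 (z - z') (by simp [hzz])
    rw [map_sub] at this
    exact sub_eq_zero.mp this
  choose σ hσ using hq
  have hzmm : ∀ x : E, ((x, σ (p x)) : E × W) ∈ P := fun x => (memP _ _).mpr (hσ (p x)).symm
  set zm : E → P := fun x => ⟨(x, σ (p x)), hzmm x⟩ with hzm
  have hzm1 : ∀ x : E, ((zm x : E × W)).1 = x := fun x => rfl
  refine ⟨{ toFun := fun x => u (zm x),
            map_add' := ?_, map_smul' := ?_ }, ?_⟩
  · intro x x'
    have h1 : u (zm (x + x')) = u (zm x + zm x') := huind _ _ (by simp [hzm1])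
    show u (zm (x + x')) = u (zm x) + u (zm x')
    rw [h1, map_add]
  · intro c x
    have h1 : u (zm (c • x)) = u (c • zm x) := huind _ _ (by simp [hzm1])
    show u (zm (c • x)) = c • u (zm x)
    rw [h1, map_smul]
  · ext m
    show u (zm (i m)) = m
    have h1 : u (zm (i m)) = u (j m) := huind _ _ (by simp [hzm1]; rfl)
    rw [h1]
    have hsjm : s (j m) = m := LinearMap.congr_fun hs m
    have hπj : π (j m) = 0 := rfl
    have : u (j m) = s (j m) - t (π (j m)) := rfl
    rw [this, hπj, map_zero, hsjm, sub_zero]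

/-- If `Cogen M = Fac(Cogen M) ∩ ⊥₁M` then `Cogen M = Copres M` and `M` is
Ext-injective in `Cogen M` (hence quasi-cotilting). -/
theorem stmt6 (M : Type u) [AddCommGroup M] [Module R M]
    (h : ∀ N : ModuleCat.{u} R, InCogen R M N ↔ (InFacCogen R M N ∧ Ext1Vanish R N M)) :
    (∀ N : ModuleCat.{u} R, InCogen R M N ↔ InCopres R M N) ∧
    (∀ N : ModuleCat.{u} R, InCogen R M N → Ext1Vanish R N M) := by
  have ext1 : ∀ N : ModuleCat.{u} R, InCogen R M N → Ext1Vanish R N M :=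
    fun N hN => ((h N).mp hN).2
  refine ⟨fun N => ⟨fun hN => ?_, fun hN => ?_⟩, ext1⟩
  · -- Cogen ⊆ Copres
    obtain ⟨X, f, hf⟩ := hN
    set Y := (N →ₗ[R] M) with hY
    set e : N →ₗ[R] (Y → M) := LinearMap.pi (fun y => y) with he
    have heinj : Function.Injective e := by
      intro a b hab
      apply hf
      funext x
      exact congrFun hab ((LinearMap.proj x).comp f)
    set W := (Y → M) with hW
    set K := LinearMap.range e with hK
    set q : W →ₗ[R] (W ⧸ K) := K.mkQ with hq
    have hqsurj : Function.Surjective q := Submodule.mkQ_surjective K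
    have hWcogen : InCogen R M (ModuleCat.of R W) :=
      ⟨Y, LinearMap.id, fun a b hab => hab⟩
    have hkerq : LinearMap.ker q = LinearMap.range e := Submodule.ker_mkQ K
    have hext : ∀ y : N →ₗ[R] M, ∃ t : W →ₗ[R] M, t ∘ₗ e = y := by
      intro y
      refine ⟨LinearMap.proj y, ?_⟩
      ext n
      rfl
    have hCext : Ext1Vanish R (W ⧸ K) M :=
      auxExt R M N W (W ⧸ K) e q hqsurj hkerq hext ((h (ModuleCat.of R W)).mp hWcogen).2
    have hCfac : InFacCogen R M (ModuleCat.of R (W ⧸ K)) :=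
      ⟨ModuleCat.of R W, q, hWcogen, hqsurj⟩
    have hCcogen : InCogen R M (ModuleCat.of R (W ⧸ K)) :=
      (h (ModuleCat.of R (W ⧸ K))).mpr ⟨hCfac, hCext⟩
    obtain ⟨Z, c, hc⟩ := hCcogen
    refine ⟨ModuleCat.of R W, ModuleCat.of R (Z → M),
      ⟨Y, LinearMap.id, LinearMap.id, rfl⟩, ⟨Z, LinearMap.id, LinearMap.id, rfl⟩,
      e, c ∘ₗ q, heinj, ?_⟩
    have : LinearMap.ker (c ∘ₗ q) = LinearMap.ker q := by
      rw [LinearMap.ker_comp, LinearMap.ker_eq_bot.mpr hc, Submodule.comap_bot]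
    rw [this, hkerq]
  · -- Copres ⊆ Cogen
    obtain ⟨M₀, M₁, ⟨X, iA, pA, hA⟩, _, f, g, hf, _⟩ := hN
    have hiA : Function.Injective iA := by
      intro a b hab
      have ha := LinearMap.congr_fun hA a
      have hb := LinearMap.congr_fun hA b
      simp only [LinearMap.comp_apply, LinearMap.id_apply] at ha hb
      rw [← ha, ← hb, hab]
    exact ⟨X, iA ∘ₗ f, hiA.comp hf⟩
end

section
/- For an R-module M and an injective cogenerator Q of R-Mod, the following are equivalent: (a) M is faithful; (b) every projective R-module lies in Cogen M; (c) every R-module is a quotient of a module in Cogen M; (d) Q is a quotient of a module in Cogen M. -/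
universe u

variable (R : Type u) [Ring R]

/-- For an injective cogenerator `Q`, the following are equivalent: `M` is faithful;
every projective module lies in `Cogen M`; every module is a quotient of a module in
`Cogen M`; `Q` is a quotient of a module in `Cogen M`. -/
theorem stmt9 (M Q : Type u) [AddCommGroup M] [Module R M]
    [AddCommGroup Q] [Module R Q]
    (hQinj : Module.Injective R Q)
    (hQcogen : ∀ N : ModuleCat.{u} R, InCogen R Q N) :
    ((∀ r : R, (∀ m : M, r • m = 0) → r = 0) ↔
      (∀ P : ModuleCat.{u} R, Module.Projective R P → InCogen R M P)) ∧
    ((∀ r : R, (∀ m : M, r • m = 0) → r = 0) ↔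
      (∀ N : ModuleCat.{u} R, InFacCogen R M N)) ∧
    ((∀ r : R, (∀ m : M, r • m = 0) → r = 0) ↔ InFacCogen R M Q) := by

  -- (a) → (b)
  have hab : (∀ r : R, (∀ m : M, r • m = 0) → r = 0) →
      ∀ P : ModuleCat.{u} R, Module.Projective R P → InCogen R M P := by
    intro hf P hP
    obtain ⟨s, hs⟩ := Module.projective_def'.mp hP
    have hsinj : Function.Injective s := by
      intro a b h
      have ha := LinearMap.congr_fun hs a
      have hb := LinearMap.congr_fun hs b
      simp only [LinearMap.comp_apply, LinearMap.id_apply] at ha hb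
      rw [← ha, ← hb, h]
    refine ⟨Prod (P : Type u) M,
      { toFun := fun p xm => (s p xm.1) • xm.2
        map_add' := by
          intro a b
          funext xm
          simp [add_smul]
        map_smul' := by
          intro r a
          funext xm
          simp [mul_smul] }, ?_⟩
    intro a b h
    apply hsinj
    ext x
    have hx : ∀ m : M, s a x • m = s b x • m := fun m => congrFun h (x, m)
    have : ∀ m : M, (s a x - s b x) • m = 0 := by
      intro m; rw [sub_smul, hx m, sub_self]
    exact sub_eq_zero.mp (hf _ this)
  -- (b) → (c)
  have hbc : (∀ P : ModuleCat.{u} R, Module.Projective R P → InCogen R M P) →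
      ∀ N : ModuleCat.{u} R, InFacCogen R M N := by
    intro hb N
    refine ⟨ModuleCat.of R ((N : Type u) →₀ R), Finsupp.linearCombination R _root_.id,
      hb _ (inferInstanceAs (Module.Projective R ((N : Type u) →₀ R))), ?_⟩
    intro n
    exact ⟨Finsupp.single n 1, by erw [Finsupp.linearCombination_single, one_smul]; rfl⟩
  -- (c) → (d)
  have hcd : (∀ N : ModuleCat.{u} R, InFacCogen R M N) → InFacCogen R M Q :=
    fun hc => hc (ModuleCat.of R Q)
  -- (d) → (a)
  have hda : InFacCogen R M Q → ∀ r : R, (∀ m : M, r • m = 0) → r = 0 := by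
    rintro ⟨L, p, ⟨X, j, hj⟩, hp⟩ r hr
    obtain ⟨Y, f, hfinj⟩ := hQcogen (ModuleCat.of R R)
    have hrQ : ∀ q : Q, r • q = 0 := by
      intro q
      obtain ⟨l, rfl⟩ := hp q
      rw [← map_smul]
      have hl : r • l = 0 := by
        apply hj
        rw [map_smul, map_zero]
        funext x
        simp [hr]
      rw [hl, map_zero]
    have h1 : f r = f 0 := by
      rw [map_zero]
      have : f r = r • f (1 : R) := by
        rw [← map_smul, smul_eq_mul, mul_one]
      rw [this]
      funext y
      exact hrQ _
    exact hfinj h1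
  exact ⟨⟨hab, fun hb => hda (hcd (hbc hb))⟩,
    ⟨fun ha => hbc (hab ha), fun hc => hda (hcd hc)⟩,
    ⟨fun ha => hcd (hbc (hab ha)), hda⟩⟩
end

section
/- A quasi-cotilting module M is cotilting if and only if M is faithful. -/
universe u

variable (R : Type u) [Ring R]

lemma my_pushout {A E N M' : Type u} [AddCommGroup A] [Module R A]
    [AddCommGroup E] [Module R E] [AddCommGroup N] [Module R N]
    [AddCommGroup M'] [Module R M']
    (i : A →ₗ[R] E) (p : E →ₗ[R] N) (f : A →ₗ[R] M')
    (hi : Function.Injective i) (hp : Function.Surjective p)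
    (he : LinearMap.range i = LinearMap.ker p) :
    ∃ (E' : ModuleCat.{u} R) (i' : M' →ₗ[R] E') (p' : E' →ₗ[R] N) (j : E →ₗ[R] E'),
      Function.Injective i' ∧ Function.Surjective p' ∧
      LinearMap.range i' = LinearMap.ker p' ∧
      p' ∘ₗ j = p ∧ j ∘ₗ i = i' ∘ₗ f ∧
      (Function.Injective f → Function.Injective j) ∧
      ∃ π' : E' →ₗ[R] (M' ⧸ LinearMap.range f),
        Function.Surjective π' ∧ LinearMap.range j = LinearMap.ker π' := by
  classical
  set S : Submodule R (E × M') := LinearMap.range (LinearMap.prod i (-f)) with hS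
  have hmemS : ∀ x : E × M', x ∈ S ↔ ∃ a : A, i a = x.1 ∧ -(f a) = x.2 := by
    intro x
    constructor
    · rintro ⟨a, ha⟩
      exact ⟨a, by rw [← ha]; simp, by rw [← ha]; simp⟩
    · rintro ⟨a, h1, h2⟩
      exact ⟨a, Prod.ext (by simpa using h1) (by simpa using h2)⟩
  have hzero : ∀ x : E × M', x ∈ S → S.mkQ x = 0 := fun x hx =>
    (Submodule.Quotient.mk_eq_zero S).2 hx
  have heq : ∀ x y : E × M', x - y ∈ S → S.mkQ x = S.mkQ y := by
    intro x y hxy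
    rw [← sub_eq_zero, ← map_sub]
    exact hzero _ hxy
  have hker : S ≤ LinearMap.ker (p ∘ₗ LinearMap.fst R E M') := by
    rintro x hx
    obtain ⟨a, h1, _⟩ := (hmemS x).1 hx
    have : i a ∈ LinearMap.ker p := he ▸ LinearMap.mem_range_self i a
    simp only [LinearMap.mem_ker, LinearMap.comp_apply, LinearMap.fst_apply]
    rw [← h1]; exact this
  have hlift : ∀ x : E × M',
      Submodule.liftQ S (p ∘ₗ LinearMap.fst R E M') hker (S.mkQ x) = p x.1 := by
    intro x; rfl
  refine ⟨ModuleCat.of R ((E × M') ⧸ S),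
    S.mkQ ∘ₗ LinearMap.inr R E M', Submodule.liftQ S (p ∘ₗ LinearMap.fst R E M') hker,
    S.mkQ ∘ₗ LinearMap.inl R E M', ?_, ?_, ?_, ?_, ?_, ?_, ?_⟩
  · -- i' injective
    intro m m' hmm
    simp only [LinearMap.comp_apply, LinearMap.inr_apply] at hmm
    rw [← sub_eq_zero, ← map_sub] at hmm
    have : ((0 : E), m - m') ∈ S := by
      have := (Submodule.Quotient.mk_eq_zero S).1 hmm
      simpa [Prod.ext_iff] using this
    obtain ⟨a, h1, h2⟩ := (hmemS _).1 this
    have ha : a = 0 := hi (by simpa using h1)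
    rw [ha] at h2
    simp only [map_zero, neg_zero] at h2
    exact sub_eq_zero.1 h2.symm
  · -- p' surjective
    intro n
    obtain ⟨e, he'⟩ := hp n
    exact ⟨S.mkQ (e, 0), he'⟩
  · -- range = ker
    apply le_antisymm
    · rintro _ ⟨m, rfl⟩
      show Submodule.liftQ S (p ∘ₗ LinearMap.fst R E M') hker (S.mkQ (0, m)) = 0
      exact map_zero p
    · rintro x hx
      obtain ⟨⟨e, m⟩, rfl⟩ := Submodule.mkQ_surjective S x
      have hx : p e = 0 := hx
      clear_value S
      have : e ∈ LinearMap.range i := he ▸ (by simpa [LinearMap.mem_ker] using hx)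
      obtain ⟨a, rfl⟩ := this
      refine ⟨m + f a, ?_⟩
      simp only [LinearMap.comp_apply, LinearMap.inr_apply]
      refine heq _ _ ((hmemS _).2 ⟨-a, by simp, by simp [neg_add]⟩)
  · ext e; exact hlift (e, 0)
  · ext a
    simp only [LinearMap.comp_apply, LinearMap.inl_apply, LinearMap.inr_apply]
    exact heq _ _ ((hmemS _).2 ⟨a, by simp, by simp⟩)
  · -- j injective when f injective
    intro hf e e' hee
    simp only [LinearMap.comp_apply, LinearMap.inl_apply] at hee
    rw [← sub_eq_zero, ← map_sub] at hee
    have : (e - e', (0 : M')) ∈ S := by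
      have := (Submodule.Quotient.mk_eq_zero S).1 hee
      simpa [Prod.ext_iff] using this
    obtain ⟨a, h1, h2⟩ := (hmemS _).1 this
    have ha : a = 0 := hf (by simpa [neg_eq_zero] using h2)
    rw [ha, map_zero] at h1
    exact sub_eq_zero.1 h1.symm
  · -- cokernel sequence
    have hker2 : S ≤ LinearMap.ker
        ((LinearMap.range f).mkQ ∘ₗ LinearMap.snd R E M') := by
      rintro x hx
      obtain ⟨a, _, h2⟩ := (hmemS x).1 hx
      simp only [LinearMap.mem_ker, LinearMap.comp_apply, LinearMap.snd_apply,
        Submodule.mkQ_apply, Submodule.Quotient.mk_eq_zero]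
      exact ⟨-a, by rw [map_neg]; exact h2⟩
    refine ⟨Submodule.liftQ S ((LinearMap.range f).mkQ ∘ₗ LinearMap.snd R E M') hker2,
      ?_, ?_⟩
    · intro y
      obtain ⟨m, rfl⟩ := Submodule.mkQ_surjective _ y
      exact ⟨S.mkQ (0, m), rfl⟩
    · apply le_antisymm
      · rintro _ ⟨e, rfl⟩
        show Submodule.liftQ S ((LinearMap.range f).mkQ ∘ₗ LinearMap.snd R E M') hker2
          (S.mkQ (e, 0)) = 0
        exact map_zero (LinearMap.range f).mkQ
      · rintro x hx
        obtain ⟨⟨e, m⟩, rfl⟩ := Submodule.mkQ_surjective S x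
        have hx : (LinearMap.range f).mkQ m = 0 := hx
        have hm : m ∈ LinearMap.range f := by
          rwa [Submodule.mkQ_apply, Submodule.Quotient.mk_eq_zero] at hx
        obtain ⟨a, rfl⟩ := hm
        refine ⟨e + i a, ?_⟩
        simp only [LinearMap.comp_apply, LinearMap.inl_apply]
        exact heq _ _ ((hmemS _).2 ⟨a, by simp, by simp⟩)

lemma inj_of_section {P Q : Type u} [AddCommGroup P] [Module R P]
    [AddCommGroup Q] [Module R Q] {i : P →ₗ[R] Q} {q : Q →ₗ[R] P}
    (hqi : q ∘ₗ i = LinearMap.id) : Function.Injective i := by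
  intro a b hab
  have ha := congrArg (fun f => f a) hqi
  have hb := congrArg (fun f => f b) hqi
  simp only [LinearMap.comp_apply, LinearMap.id_apply] at ha hb
  rw [← ha, ← hb, hab]

lemma ext1_pi {N : Type u} [AddCommGroup N] [Module R N]
    {M : Type u} [AddCommGroup M] [Module R M]
    (h : Ext1Vanish R N M) (X : Type u) : Ext1Vanish R N (X → M) := by
  intro E i p hi hp he
  have H : ∀ x : X, ∃ rx : E →ₗ[R] M, ∀ m : X → M, rx (i m) = m x := by
    intro x
    obtain ⟨E', i', p', j, hi', hp', he', hpj, hji, hjinj, hcoker⟩ :=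
      my_pushout R i p (LinearMap.proj x) hi hp he
    obtain ⟨r, hr⟩ := h E' i' p' hi' hp' he'
    refine ⟨r ∘ₗ j, fun m => ?_⟩
    have h1 : j (i m) = i' (m x) := by
      have := congrArg (fun f => f m) hji
      simpa using this
    have h2 : r (i' (m x)) = m x := by
      have := congrArg (fun f => f (m x)) hr
      simpa using this
    simp only [LinearMap.comp_apply, h1, h2]
  choose rx hrx using H
  refine ⟨LinearMap.pi rx, ?_⟩
  ext m x
  simpa [LinearMap.pi_apply] using hrx x m

lemma ext1_adp {N M M₀ : Type u} [AddCommGroup N] [Module R N]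
    [AddCommGroup M] [Module R M] [AddCommGroup M₀] [Module R M₀]
    (h : Ext1Vanish R N M) (had : InAdp R M M₀) : Ext1Vanish R N M₀ := by
  obtain ⟨X, i₀, q, hqi⟩ := had
  have hpi := ext1_pi R h X
  intro E i p hi hp he
  obtain ⟨E', i', p', j, hi', hp', he', hpj, hji, hjinj, hcoker⟩ := my_pushout R i p i₀ hi hp he
  obtain ⟨r, hr⟩ := hpi E' i' p' hi' hp' he'
  refine ⟨q ∘ₗ (r ∘ₗ j), ?_⟩
  ext m
  have h1 : j (i m) = i' (i₀ m) := by
    have := congrArg (fun f => f m) hji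
    simpa using this
  have h2 : r (i' (i₀ m)) = i₀ m := by
    have := congrArg (fun f => f (i₀ m)) hr
    simpa using this
  have h3 : q (i₀ m) = m := by
    have := congrArg (fun f => f m) hqi
    simpa using this
  simp only [LinearMap.comp_apply, LinearMap.id_apply, h1, h2, h3]

lemma lift_map_M {A B C M : Type u} [AddCommGroup A] [Module R A]
    [AddCommGroup B] [Module R B] [AddCommGroup C] [Module R C]
    [AddCommGroup M] [Module R M]
    (i : A →ₗ[R] B) (g : B →ₗ[R] C)
    (hi : Function.Injective i) (hg : Function.Surjective g)
    (he : LinearMap.range i = LinearMap.ker g)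
    (hC : Ext1Vanish R C M) (h : A →ₗ[R] M) :
    ∃ h' : B →ₗ[R] M, h' ∘ₗ i = h := by
  obtain ⟨E', i', p', j, hi', hp', he', hpj, hji, hjinj, hcoker⟩ := my_pushout R i g h hi hg he
  obtain ⟨r, hr⟩ := hC E' i' p' hi' hp' he'
  refine ⟨r ∘ₗ j, ?_⟩
  ext a
  have h1 : j (i a) = i' (h a) := by
    have := congrArg (fun f => f a) hji
    simpa using this
  have h2 : r (i' (h a)) = h a := by
    have := congrArg (fun f => f (h a)) hr
    simpa using this
  simp only [LinearMap.comp_apply, h1, h2]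

lemma lift_map_adp {A B C M M₀ : Type u} [AddCommGroup A] [Module R A]
    [AddCommGroup B] [Module R B] [AddCommGroup C] [Module R C]
    [AddCommGroup M] [Module R M] [AddCommGroup M₀] [Module R M₀]
    (i : A →ₗ[R] B) (g : B →ₗ[R] C)
    (hi : Function.Injective i) (hg : Function.Surjective g)
    (he : LinearMap.range i = LinearMap.ker g)
    (hC : Ext1Vanish R C M) (had : InAdp R M M₀) (h : A →ₗ[R] M₀) :
    ∃ h' : B →ₗ[R] M₀, h' ∘ₗ i = h := by
  obtain ⟨X, i₀, q, hqi⟩ := had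
  have Hx : ∀ x : X, ∃ hx : B →ₗ[R] M, hx ∘ₗ i = (LinearMap.proj x) ∘ₗ (i₀ ∘ₗ h) :=
    fun x => lift_map_M R i g hi hg he hC _
  choose hx hhx using Hx
  refine ⟨q ∘ₗ LinearMap.pi hx, ?_⟩
  ext a
  have h1 : LinearMap.pi hx (i a) = i₀ (h a) := by
    ext x
    have := congrArg (fun f => f a) (hhx x)
    simpa [LinearMap.pi_apply] using this
  have h2 : q (i₀ (h a)) = h a := by
    have := congrArg (fun f => f (h a)) hqi
    simpa using this
  simp only [LinearMap.comp_apply, h1, h2]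


lemma cogen_of_inj {M N P : Type u} [AddCommGroup M] [Module R M]
    [AddCommGroup N] [Module R N] [AddCommGroup P] [Module R P]
    (f : N →ₗ[R] P) (hf : Function.Injective f) (hP : InCogen R M P) :
    InCogen R M N := by
  obtain ⟨X, g, hg⟩ := hP
  exact ⟨X, g ∘ₗ f, hg.comp hf⟩

lemma cogen_ext_closed {M : Type u} [AddCommGroup M] [Module R M]
    (hcc : ∀ N : ModuleCat.{u} R, InCogen R M N ↔ InCopres R M N)
    (hext : ∀ N : ModuleCat.{u} R, InCogen R M N → Ext1Vanish R N M)
    {A B C : Type u} [AddCommGroup A] [Module R A] [AddCommGroup B] [Module R B]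
    [AddCommGroup C] [Module R C]
    (i : A →ₗ[R] B) (g : B →ₗ[R] C) (hi : Function.Injective i)
    (hg : Function.Surjective g) (he : LinearMap.range i = LinearMap.ker g)
    (hA : InCogen R M A) (hC : InCogen R M C) : InCogen R M B := by
  have hA' : InCopres R M (ModuleCat.of R A) := (hcc (ModuleCat.of R A)).1 hA
  obtain ⟨M₀, M₁, had₀, had₁, h, g', hh, hrg⟩ := hA'
  have hextC : Ext1Vanish R C M := hext (ModuleCat.of R C) hC
  obtain ⟨H, hH⟩ := lift_map_adp R i g hi hg he hextC had₀ h
  obtain ⟨X, i₀, q, hqi⟩ := had₀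
  obtain ⟨Y, e, hee⟩ := hC
  refine ⟨X ⊕ Y, LinearMap.pi (fun s => Sum.elim
    (fun x => (LinearMap.proj x : (X → M) →ₗ[R] M) ∘ₗ (i₀ ∘ₗ H))
    (fun y => (LinearMap.proj y : (Y → M) →ₗ[R] M) ∘ₗ (e ∘ₗ g)) s), ?_⟩
  intro b b' hbb
  rw [← sub_eq_zero, ← map_sub] at hbb
  set d := b - b' with hd
  have hcomp : ∀ s : X ⊕ Y, Sum.elim
      (fun x => (LinearMap.proj x : (X → M) →ₗ[R] M) ∘ₗ (i₀ ∘ₗ H))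
      (fun y => (LinearMap.proj y : (Y → M) →ₗ[R] M) ∘ₗ (e ∘ₗ g)) s d = 0 := by
    intro s
    have := congrFun (congrArg (fun (v : (X ⊕ Y) → M) => v) hbb) s
    simpa [LinearMap.pi_apply] using this
  have hgd : g d = 0 := by
    apply hee
    rw [map_zero]
    ext y
    have := hcomp (Sum.inr y)
    simpa using this
  have hdr : d ∈ LinearMap.range i := he ▸ (by simpa [LinearMap.mem_ker] using hgd)
  obtain ⟨a, ha⟩ := hdr
  have hHd : i₀ (H d) = 0 := by
    ext x
    have := hcomp (Sum.inl x)
    simpa using this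
  have hHa : H d = h a := by
    rw [← ha]
    have := congrArg (fun f => f a) hH
    simpa using this
  have hi₀inj : Function.Injective i₀ := inj_of_section R hqi
  have hha : h a = 0 := by
    apply hi₀inj
    rw [← hHa, hHd, map_zero]
  have ha0 : a = 0 := hh (by rw [hha, map_zero])
  have : d = 0 := by rw [← ha, ha0, map_zero]
  exact sub_eq_zero.1 (hd ▸ this)

/-- A quasi-cotilting module `M` is cotilting iff it is faithful. -/
theorem stmt12 (M : Type u) [AddCommGroup M] [Module R M]
    (hcc : ∀ N : ModuleCat.{u} R, InCogen R M N ↔ InCopres R M N)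
    (hext : ∀ N : ModuleCat.{u} R, InCogen R M N → Ext1Vanish R N M) :
    (∀ N : ModuleCat.{u} R, InCogen R M N ↔ Ext1Vanish R N M) ↔
    (∀ r : R, (∀ m : M, r • m = 0) → r = 0) := by
  constructor
  · -- cotilting → faithful
    intro hcot r hr
    have hRext : Ext1Vanish R R M := by
      intro E i p hi hp he
      obtain ⟨e, hpe⟩ := hp 1
      set k : E →ₗ[R] E := LinearMap.id - (LinearMap.toSpanSingleton R E e) ∘ₗ p
        with hk
      have hkmem : ∀ x : E, k x ∈ LinearMap.range i := by
        intro x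
        rw [he, LinearMap.mem_ker]
        simp [hk, hpe, smul_eq_mul, mul_one]
      refine ⟨(LinearEquiv.ofInjective i hi).symm.toLinearMap ∘ₗ
        LinearMap.codRestrict (LinearMap.range i) k hkmem, ?_⟩
      ext m
      simp only [LinearMap.comp_apply, LinearEquiv.coe_coe, LinearMap.id_apply]
      rw [LinearEquiv.symm_apply_eq]
      apply Subtype.ext
      rw [LinearEquiv.ofInjective_apply]
      have hpim : p (i m) = 0 := by
        have : i m ∈ LinearMap.ker p := he ▸ LinearMap.mem_range_self i m
        simpa using this
      simp [hk, hpim]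
    have hRcogen : InCogen R M R := (hcot (ModuleCat.of R R)).2 hRext
    obtain ⟨X, f, hf⟩ := hRcogen
    have h1 : f r = 0 := by
      have h2 : f r = r • f 1 := by rw [← map_smul, smul_eq_mul, mul_one]
      rw [h2]
      ext x
      simp [Pi.smul_apply, hr]
    exact hf (by rw [h1, map_zero])
  · -- faithful → cotilting
    intro hfaith N
    refine ⟨hext N, ?_⟩
    intro hN
    classical
    set π : (↑N →₀ R) →ₗ[R] ↑N := Finsupp.linearCombination R (id : ↑N → ↑N) with hπ
    have hπs : Function.Surjective π := Finsupp.linearCombination_id_surjective R ↑N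
    set K : Submodule R (↑N →₀ R) := LinearMap.ker π with hK
    have hrange : LinearMap.range K.subtype = LinearMap.ker π := K.range_subtype
    have hFcogen : InCogen R M ((N : Type u) →₀ R) := by
      refine ⟨(↑N × M), LinearMap.pi (fun nm =>
        (LinearMap.toSpanSingleton R M nm.2) ∘ₗ (Finsupp.lapply nm.1)), ?_⟩
      intro c c' hcc'
      rw [← sub_eq_zero, ← map_sub] at hcc'
      set d := c - c' with hd
      have hzero : ∀ (n : ↑N) (m : M), (d n) • m = (0 : M) := by
        intro n m
        have := congrFun hcc' (n, m)
        simpa [LinearMap.pi_apply, LinearMap.toSpanSingleton_apply,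
          Finsupp.lapply_apply] using this
      have : d = 0 := by
        ext n
        simpa using hfaith (d n) (hzero n)
      exact sub_eq_zero.1 this
    have hKcogen : InCogen R M (↥K) :=
      cogen_of_inj R K.subtype K.injective_subtype hFcogen
    obtain ⟨M₀, M₁, had₀, had₁, h, g', hh, hrg⟩ :=
      (hcc (ModuleCat.of R ↥K)).1 hKcogen
    obtain ⟨P, i', p', j, hi', hp', he', hpj, hji, hjinj, hcoker⟩ :=
      my_pushout R K.subtype π h K.injective_subtype hπs hrange
    -- splitting of 0 → M₀ → P → N → 0
    have hNext₀ : Ext1Vanish R (↑N) (↑M₀) := ext1_adp R hN had₀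
    obtain ⟨rr, hrr⟩ := hNext₀ P i' p' hi' hp' he'
    have hri' : ∀ y, rr (i' y) = y := by
      intro y
      have := congrArg (fun f => f y) hrr
      simpa using this
    have hpi' : ∀ y, p' (i' y) = 0 := by
      intro y
      have : i' y ∈ LinearMap.ker p' := he' ▸ LinearMap.mem_range_self i' y
      simpa using this
    -- P is in Cogen M via extension closure
    obtain ⟨π', hπ's, hπ'r⟩ := hcoker
    have hQcogen : InCogen R M ((↑M₀) ⧸ LinearMap.range h) := by
      obtain ⟨X₁, i₁, q₁, hq₁⟩ := had₁
      have hM₁cogen : InCogen R M (↑M₁) := ⟨X₁, i₁, inj_of_section R hq₁⟩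
      refine cogen_of_inj R (Submodule.liftQ (LinearMap.range h) g' (le_of_eq hrg))
        ?_ hM₁cogen
      rw [← LinearMap.ker_eq_bot]
      exact Submodule.ker_liftQ_eq_bot _ _ _ (le_of_eq hrg.symm)
    have hPcogen : InCogen R M (↑P) :=
      cogen_ext_closed R hcc hext j π' (hjinj hh) hπ's hπ'r
        hFcogen hQcogen
    -- N is a direct summand of P
    set σ : P →ₗ[R] (↑N × ↑M₀) := LinearMap.prod p' rr with hσ
    have hσinj : Function.Injective σ := by
      intro x x' hxx
      rw [← sub_eq_zero, ← map_sub] at hxx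
      set d := x - x' with hd
      have h1 : p' d = 0 ∧ rr d = 0 := by
        have := Prod.ext_iff.1 hxx
        simpa [hσ, LinearMap.prod_apply] using this
      have : d ∈ LinearMap.range i' := he' ▸ (by simp [LinearMap.mem_ker, h1.1])
      obtain ⟨y, hy⟩ := this
      have hy0 : y = 0 := by
        have := h1.2
        rw [← hy, hri'] at this
        exact this
      have : d = 0 := by rw [← hy, hy0, map_zero]
      exact sub_eq_zero.1 (hd ▸ this)
    have hσsurj : Function.Surjective σ := by
      rintro ⟨n, m⟩
      obtain ⟨x, hx⟩ := hp' n
      refine ⟨x - i' (rr x) + i' m, ?_⟩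
      have : σ (x - i' (rr x) + i' m) =
          (p' x - p' (i' (rr x)) + p' (i' m), rr x - rr (i' (rr x)) + rr (i' m)) := by
        simp [hσ, LinearMap.prod_apply, map_add, map_sub]
      rw [this]
      simp [hpi', hri', hx]
    set eqv : P ≃ₗ[R] (↑N × ↑M₀) := LinearEquiv.ofBijective σ ⟨hσinj, hσsurj⟩
    exact cogen_of_inj R (eqv.symm.toLinearMap ∘ₗ LinearMap.inl R ↑N ↑M₀)
      (eqv.symm.injective.comp LinearMap.inl_injective) hPcogen
end

section
/- If M is a quasi-cotilting module, then Adp M = ker Ext^1_R(Cogen M, −) ∩ Cogen M; that is, a module N lies in Adp M if and only if N ∈ Cogen M and Ext^1_R(L, N) = 0 for all L ∈ Cogen M. -/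
universe u

variable (R : Type u) [Ring R]

/-- If `M` is quasi-cotilting then `Adp M = ker Ext¹(Cogen M, -) ∩ Cogen M`. -/
theorem stmt17 (M : Type u) [AddCommGroup M] [Module R M]
    (hcc : ∀ N : ModuleCat.{u} R, InCogen R M N ↔ InCopres R M N)
    (hext : ∀ N : ModuleCat.{u} R, InCogen R M N → Ext1Vanish R N M) :
    ∀ N : ModuleCat.{u} R,
      InAdp R M N ↔
        (InCogen R M N ∧ ∀ L : ModuleCat.{u} R, InCogen R M L → Ext1Vanish R L N) := by
  intro N
  constructor
  · rintro ⟨X, i₀, p₀, hpi⟩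
    have hinj : Function.Injective i₀ := by
      intro a b hab
      have := congrArg p₀ hab
      simpa [LinearMap.ext_iff] using
        (LinearMap.congr_fun hpi a).symm.trans (this.trans (LinearMap.congr_fun hpi b))
    refine ⟨⟨X, i₀, hinj⟩, ?_⟩
    intro L hL E i p hi hp hrk
    -- For each coordinate x, extend the map `n ↦ i₀ n x : N → M` along `i : N ↪ E`
    -- using a pushout and `Ext¹(L, M) = 0`.
    have key : ∀ x : X, ∃ gx : (E : Type u) →ₗ[R] M, ∀ n : N, gx (i n) = i₀ n x := by
      intro x
      set hx : (N : Type u) →ₗ[R] M := (LinearMap.proj x).comp i₀ with hhx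
      set W : Submodule R (M × E) := LinearMap.range (LinearMap.prod hx (-i)) with hW
      set inc : M →ₗ[R] (M × E) ⧸ W := W.mkQ ∘ₗ LinearMap.inl R M E with hinc
      set q : (M × E) →ₗ[R] L := p ∘ₗ LinearMap.snd R M E with hq
      have hWq : W ≤ LinearMap.ker q := by
        rintro ⟨m, e⟩ ⟨n, hn⟩
        have he : e = -(i n) := by
          have := congrArg Prod.snd hn
          simpa using this.symm
        have hpin : p (i n) = 0 := by
          have : i n ∈ LinearMap.ker p := hrk ▸ LinearMap.mem_range_self i n
          simpa using this
        simp [q, he, hpin]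
      set proj : ((M × E) ⧸ W) →ₗ[R] L := W.liftQ q hWq with hproj
      have hincinj : Function.Injective inc := by
        refine (injective_iff_map_eq_zero inc).mpr ?_
        intro m hm
        have hmem : ((m, 0) : M × E) ∈ W := by
          have : W.mkQ (m, 0) = 0 := hm
          simpa [Submodule.Quotient.mk_eq_zero] using this
        obtain ⟨n, hn⟩ := hmem
        have h2 : -(i n) = 0 := congrArg Prod.snd hn
        have hn0 : n = 0 := hi (by simpa using neg_eq_zero.mp h2)
        have h1 : hx n = m := congrArg Prod.fst hn
        rw [← h1, hn0, map_zero]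
      have hsurj : Function.Surjective proj := by
        intro l
        obtain ⟨e, he⟩ := hp l
        exact ⟨W.mkQ (0, e), by simp [proj, q, he]⟩
      have heq : LinearMap.range inc = LinearMap.ker proj := by
        apply le_antisymm
        · rintro _ ⟨m, rfl⟩
          simp [inc, proj, q]
        · rintro z hz
          obtain ⟨⟨m, e⟩, rfl⟩ := Submodule.mkQ_surjective W z
          have hpe : p e = 0 := by simpa [proj, q] using hz
          have : e ∈ LinearMap.range i := hrk ▸ (by simpa using hpe)
          obtain ⟨n, rfl⟩ := this
          refine ⟨m + hx n, ?_⟩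
          show W.mkQ (m + hx n, 0) = W.mkQ (m, i n)
          rw [Submodule.mkQ_apply, Submodule.mkQ_apply, Submodule.Quotient.eq]
          exact ⟨n, by simp [Prod.ext_iff]⟩
      obtain ⟨r, hr⟩ := hext L hL (ModuleCat.of R ((M × E) ⧸ W)) inc proj hincinj hsurj heq
      refine ⟨r ∘ₗ W.mkQ ∘ₗ LinearMap.inr R M E, ?_⟩
      intro n
      have hmk : W.mkQ (0, i n) = W.mkQ (hx n, 0) := by
        rw [Submodule.mkQ_apply, Submodule.mkQ_apply, Submodule.Quotient.eq]
        exact ⟨-n, by simp [Prod.ext_iff]⟩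
      have : r (W.mkQ (0, i n)) = hx n := by
        rw [hmk]
        exact LinearMap.congr_fun hr (hx n)
      simpa [hx] using this
    choose g hg using key
    refine ⟨p₀ ∘ₗ LinearMap.pi g, ?_⟩
    ext n
    have hpg : (LinearMap.pi g) (i n) = i₀ n := funext fun x => hg x n
    show p₀ ((LinearMap.pi g) (i n)) = n
    rw [hpg]
    exact LinearMap.congr_fun hpi n
  · rintro ⟨hcog, hNext⟩
    obtain ⟨M₀, M₁, h0, h1, f, gm, hf, hrange⟩ := (hcc N).mp hcog
    set W := LinearMap.range f with hW
    -- The cokernel `M₀ ⧸ range f` embeds in `M₁`, hence lies in `Cogen M`.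
    have hCcog : InCogen R M (ModuleCat.of R ((M₀ : Type u) ⧸ W)) := by
      obtain ⟨Y, i₁, hi₁⟩ : InCogen R M M₁ := by
        obtain ⟨Y, iY, pY, hYp⟩ := h1
        exact ⟨Y, iY, fun a b hab => by
          have := congrArg pY hab
          simpa [LinearMap.ext_iff] using
            (LinearMap.congr_fun hYp a).symm.trans (this.trans (LinearMap.congr_fun hYp b))⟩
      have hle : W ≤ LinearMap.ker gm := le_of_eq hrange
      refine ⟨Y, i₁ ∘ₗ W.liftQ gm hle, ?_⟩
      have hliftinj : Function.Injective (W.liftQ gm hle) := by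
        rw [← LinearMap.ker_eq_bot]
        exact Submodule.ker_liftQ_eq_bot W gm hle (le_of_eq hrange.symm)
      exact hi₁.comp hliftinj
    have hvan := hNext (ModuleCat.of R ((M₀ : Type u) ⧸ W)) hCcog
    obtain ⟨r, hr⟩ := hvan M₀ f W.mkQ hf (Submodule.mkQ_surjective W) (Submodule.ker_mkQ W).symm
    obtain ⟨Z, iZ, pZ, hZ⟩ := h0
    refine ⟨Z, iZ ∘ₗ f, r ∘ₗ pZ, ?_⟩
    ext n
    have h1' : pZ (iZ (f n)) = f n := LinearMap.congr_fun hZ (f n)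
    have h2' : r (f n) = n := LinearMap.congr_fun hr n
    simp [h1', h2']
end

section
/- Let T be a class of R-modules, Q an injective cogenerator, and 0 → A → B →^α Q →^π K → 0 an exact sequence such that α: B → Q is a T-precover and A is Ext-injective in T. Set D = {N : Hom_R(N, π) = 0} and M = Im α. Then T ⊆ D, and M is both an injective object of D (every short exact sequence in D is Hom(−,M)-exact) and a cogenerator of D (every N ∈ D embeds into a power of M). -/
universe u

variable (R : Type u) [Ring R]

/-- Given a class `T`, an injective cogenerator `Q`, and an exact sequence
`0 → A → B →^α Q →^π K → 0` with `α` a `T`-precover and `A` Ext-injective in `T`: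
with `D = {N : Hom(N, π) = 0}` and `M = Im α`, we have `T ⊆ D`, `M` is an injective
object of `D`, and `M` is a cogenerator of `D`. -/
theorem stmt18 (Q K : Type u) [AddCommGroup Q] [Module R Q]
    [AddCommGroup K] [Module R K]
    (A B : ModuleCat.{u} R) (T : ModuleCat.{u} R → Prop)
    (hQinj : Module.Injective R Q)
    (hQcogen : ∀ N : ModuleCat.{u} R, InCogen R Q N)
    (i : A →ₗ[R] B) (α : B →ₗ[R] Q) (π : Q →ₗ[R] K)
    (hi : Function.Injective i)
    (hiα : LinearMap.range i = LinearMap.ker α)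
    (hαπ : LinearMap.range α = LinearMap.ker π)
    (hπ : Function.Surjective π)
    (hBT : T B)
    (hprecover : ∀ X : ModuleCat.{u} R, T X →
      ∀ u : X →ₗ[R] Q, ∃ u' : X →ₗ[R] B, α ∘ₗ u' = u)
    (hExtInj : ∀ X : ModuleCat.{u} R, T X → Ext1Vanish R X A) :
    (∀ X : ModuleCat.{u} R, T X → ∀ u : X →ₗ[R] Q, π ∘ₗ u = 0) ∧
    (∀ (X Y Z : ModuleCat.{u} R) (f : X →ₗ[R] Y) (g : Y →ₗ[R] Z),
      (∀ u : X →ₗ[R] Q, π ∘ₗ u = 0) → (∀ u : Y →ₗ[R] Q, π ∘ₗ u = 0) →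
      (∀ u : Z →ₗ[R] Q, π ∘ₗ u = 0) →
      Function.Injective f → Function.Surjective g →
      LinearMap.range f = LinearMap.ker g →
      ∀ h : X →ₗ[R] (LinearMap.range α),
        ∃ h' : Y →ₗ[R] (LinearMap.range α), h' ∘ₗ f = h) ∧
    (∀ N : ModuleCat.{u} R, (∀ u : N →ₗ[R] Q, π ∘ₗ u = 0) →
      ∃ (I : Type u) (e : N →ₗ[R] (I → (LinearMap.range α))), Function.Injective e) := by
  refine ⟨?_, ?_, ?_⟩
  · intro X hX u
    obtain ⟨u', hu'⟩ := hprecover X hX u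
    rw [← hu', ← LinearMap.comp_assoc]
    have : π ∘ₗ α = 0 := by
      ext b
      have : α b ∈ LinearMap.ker π := hαπ ▸ LinearMap.mem_range_self α b
      simpa using this
    rw [this, LinearMap.zero_comp]
  · intro X Y Z f g hX hY hZ hf hg hfg h
    set ι := (LinearMap.range α).subtype
    obtain ⟨h₁, hh₁⟩ := hQinj.out f hf (ι ∘ₗ h)
    have hmem : ∀ y : Y, h₁ y ∈ LinearMap.range α := by
      intro y
      rw [hαπ, LinearMap.mem_ker]
      have := hY h₁
      exact congrFun (congrArg DFunLike.coe this) y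
    refine ⟨LinearMap.codRestrict _ h₁ hmem, ?_⟩
    ext x
    exact hh₁ x
  · intro N hN
    obtain ⟨I, f, hf⟩ := hQcogen N
    have hmem : ∀ (n : N) (x : I), f n x ∈ LinearMap.range α := by
      intro n x
      rw [hαπ, LinearMap.mem_ker]
      have := hN ((LinearMap.proj x) ∘ₗ f)
      exact congrFun (congrArg DFunLike.coe this) n
    refine ⟨I, LinearMap.pi (fun x => LinearMap.codRestrict _ ((LinearMap.proj x) ∘ₗ f)
      (fun n => by simpa using hmem n x)), ?_⟩
    intro n₁ n₂ hn
    apply hf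
    funext x
    exact congrArg Subtype.val (congrFun hn x)
end
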